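/- arXiv:2508.01061 — 3 statements merged into one kernel-verified Lean document; each statement's English description precedes it below -/
import Mathlib

section
/- Let T ∈ L(H) be selfadjoint, G-equivariant, Fredholm, with essential spectrum contained in (0,∞). Then T = S + K, where S ∈ L(H) is selfadjoint, G-equivariant, invertible and positive (⟨Su,u⟩ > 0 for u ≠ 0, with spectrum in (0,∞)), and K ∈ L(H) is compact, selfadjoint and G-equivariant. -/
open scoped RealInnerProductSpace

/-- A bounded selfadjoint operator is Fredholm iff its kernel is finite-dimensional
and its range is closed. -/
def IsFredholmOp {H : Type*} [NormedAddCommGroup H] [InnerProductSpace ℝ H]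
    (T : H →L[ℝ] H) : Prop :=
  FiniteDimensional ℝ (LinearMap.ker (T : H →ₗ[ℝ] H)) ∧ IsClosed (LinearMap.range (T : H →ₗ[ℝ] H) : Set H)

/-- The essential spectrum of a bounded selfadjoint operator: the set of real `μ` such that
`μ - T` is not Fredholm. -/
def essSpectrum {H : Type*} [NormedAddCommGroup H] [InnerProductSpace ℝ H]
    (T : H →L[ℝ] H) : Set ℝ :=
  {μ : ℝ | ¬ IsFredholmOp (μ • (1 : H →L[ℝ] H) - T)}

/-- Equivariance of a bounded operator with respect to an orthogonal representation `ρ`. -/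
def IsEquivariant {H : Type*} [NormedAddCommGroup H] [InnerProductSpace ℝ H]
    {G : Type*} [Group G] (ρ : G →* (H ≃ₗᵢ[ℝ] H)) (T : H →L[ℝ] H) : Prop :=
  ∀ (g : G) (u : H), T (ρ g u) = ρ g (T u)

/-!
For `μ ≤ 0` the operator `μ - T` is Fredholm, so it is bounded below on the orthogonal
complement of its kernel. Eigenvectors of `T` for other eigenvalues lie in that complement, so
the nonpositive eigenvalues are isolated in the compact interval `[-‖T‖, 0]`, hence finitely
many, each of finite multiplicity. Their eigenspaces span a finite-dimensional subspace `E`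
that is invariant under `T` and under `G`. On `Eᗮ` every `T - μ` with `μ ≤ 0` is bounded below;
for a symmetric operator this pushes the bottom of the quadratic form above `0`, so
`ε‖v‖² ≤ ⟪T v, v⟫` on `Eᗮ` for some `ε > 0`. With `P` the orthogonal projection onto `E`,
`K = (T - ε) P` has finite rank and `S = T - K`, which is `T` on `Eᗮ` and `ε` on `E`, is coercive.
-/

open Module.End

namespace ContinuousLinearMap

variable {𝕜 H F : Type*} [RCLike 𝕜] [NormedAddCommGroup H] [InnerProductSpace 𝕜 H]
  [CompleteSpace H] [NormedAddCommGroup F] [NormedSpace 𝕜 F] [CompleteSpace F]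

theorem exists_mul_norm_le_of_isClosed_range (A : H →L[𝕜] F)
    (hA : IsClosed (LinearMap.range (A : H →ₗ[𝕜] F) : Set F)) :
    ∃ c > 0, ∀ v ∈ (LinearMap.ker (A : H →ₗ[𝕜] F))ᗮ, c * ‖v‖ ≤ ‖A v‖ := by
  set N := LinearMap.ker (A : H →ₗ[𝕜] F)
  set B := A ∘L Nᗮ.subtypeL
  have hinj : Function.Injective B := by
    refine (injective_iff_map_eq_zero B).2 fun v hBv => Subtype.ext ?_
    exact inner_self_eq_zero.1 <| (Submodule.mem_orthogonal' _ _).1 v.2 v hBv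
  have hrange : Set.range B = Set.range A := by
    refine subset_antisymm (Set.range_comp_subset_range Nᗮ.subtypeL A) ?_
    rintro _ ⟨x, rfl⟩
    refine ⟨⟨x - N.starProjection x, N.sub_starProjection_mem_orthogonal x⟩, ?_⟩
    simp [B, show A (N.starProjection x) = 0 from N.starProjection_apply_mem x]
  obtain ⟨K, hK⟩ := B.antilipschitz_of_injective_of_isClosed_range hinj (hrange ▸ hA)
  refine ⟨(K + 1)⁻¹, by positivity, fun v hv => ?_⟩
  rw [inv_mul_le_iff₀ (by positivity)]
  calc ‖v‖ ≤ K * ‖A v‖ := B.bound_of_antilipschitz hK ⟨v, hv⟩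
    _ ≤ (K + 1) * ‖A v‖ := by gcongr; linarith

end ContinuousLinearMap

section QuadraticForm

variable {H : Type*} [NormedAddCommGroup H] [InnerProductSpace ℝ H] {T : H →L[ℝ] H}
  {W : Submodule ℝ H}

theorem LinearMap.IsSymmetric.inner_map_sq_le_of_nonneg (hT : (T : H →ₗ[ℝ] H).IsSymmetric)
    (hpos : ∀ v ∈ W, 0 ≤ ⟪T v, v⟫) {x y : H} (hx : x ∈ W) (hy : y ∈ W) :
    ⟪T x, y⟫ ^ 2 ≤ ⟪T x, x⟫ * ⟪T y, y⟫ := by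
  have hyx : ⟪T y, x⟫ = ⟪T x, y⟫ := by rw [real_inner_comm]; exact (hT x y).symm
  have hquad : ∀ t : ℝ, 0 ≤ ⟪T x, x⟫ * (t * t) + 2 * ⟪T x, y⟫ * t + ⟪T y, y⟫ := fun t => by
    have := hpos (t • x + y) (W.add_mem (W.smul_mem t hx) hy)
    simp only [map_add, map_smul, inner_add_left, inner_add_right, real_inner_smul_left,
      real_inner_smul_right, hyx] at this
    linarith
  have := discrim_le_zero hquad
  rw [discrim] at this
  linarith

theorem LinearMap.IsSymmetric.norm_map_sq_le_of_nonneg (hT : (T : H →ₗ[ℝ] H).IsSymmetric)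
    (hW : W ∈ invtSubmodule (T : H →ₗ[ℝ] H)) (hpos : ∀ v ∈ W, 0 ≤ ⟪T v, v⟫) {x : H}
    (hx : x ∈ W) : ‖T x‖ ^ 2 ≤ ‖T‖ * ⟪T x, x⟫ := by
  have hTx : T x ∈ W := hW hx
  have hCS := hT.inner_map_sq_le_of_nonneg hpos hx hTx
  rw [real_inner_self_eq_norm_sq] at hCS
  have hTTx : ⟪T (T x), T x⟫ ≤ ‖T‖ * ‖T x‖ ^ 2 :=
    (real_inner_le_norm _ _).trans <| by nlinarith [T.le_opNorm (T x), norm_nonneg (T x)]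
  have hk : 0 ≤ ‖T‖ * ⟪T x, x⟫ := mul_nonneg (norm_nonneg T) (hpos x hx)
  have : ‖T x‖ ^ 2 * ‖T x‖ ^ 2 ≤ ‖T‖ * ⟪T x, x⟫ * ‖T x‖ ^ 2 := by
    nlinarith [mul_le_mul_of_nonneg_left hTTx (hpos x hx)]
  nlinarith

theorem LinearMap.IsSymmetric.exists_pos_forall_add_mul_norm_sq_le_inner
    (hT : (T : H →ₗ[ℝ] H).IsSymmetric) (hW : W ∈ invtSubmodule (T : H →ₗ[ℝ] H)) {μ c : ℝ}
    (hc : 0 < c) (hμ : ∀ v ∈ W, μ * ‖v‖ ^ 2 ≤ ⟪T v, v⟫)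
    (hbound : ∀ v ∈ W, c * ‖v‖ ≤ ‖T v - μ • v‖) :
    ∃ δ > 0, ∀ v ∈ W, (μ + δ) * ‖v‖ ^ 2 ≤ ⟪T v, v⟫ := by
  set B := T - μ • (1 : H →L[ℝ] H)
  have hBv (v : H) : B v = T v - μ • v := rfl
  have hBform (v : H) : ⟪B v, v⟫ = ⟪T v, v⟫ - μ * ‖v‖ ^ 2 := by
    rw [hBv, inner_sub_left, real_inner_smul_left, real_inner_self_eq_norm_sq]
  have hB : (B : H →ₗ[ℝ] H).IsSymmetric := fun x y => by
    simp only [ContinuousLinearMap.coe_coe, hBv, inner_sub_left, inner_sub_right,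
      real_inner_smul_left, real_inner_smul_right]
    rw [← ContinuousLinearMap.coe_coe T, hT x y]
  have hBpos : ∀ v ∈ W, 0 ≤ ⟪B v, v⟫ := fun v hv => by rw [hBform]; linarith [hμ v hv]
  have hBW : W ∈ invtSubmodule (B : H →ₗ[ℝ] H) := fun v hv =>
    W.sub_mem (hW hv) (W.smul_mem μ hv)
  refine ⟨c ^ 2 / (‖B‖ + 1), by positivity, fun v hv => ?_⟩
  have hnorm := hB.norm_map_sq_le_of_nonneg hBW hBpos hv
  have hc' : (c * ‖v‖) ^ 2 ≤ ‖B v‖ ^ 2 := by gcongr; exact hbound v hv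
  have : c ^ 2 / (‖B‖ + 1) * ‖v‖ ^ 2 ≤ ⟪B v, v⟫ := by
    rw [div_mul_eq_mul_div, div_le_iff₀ (by positivity)]
    nlinarith [hBpos v hv]
  rw [hBform] at this
  linarith

theorem LinearMap.IsSymmetric.exists_pos_forall_mul_norm_sq_le_inner
    (hT : (T : H →ₗ[ℝ] H).IsSymmetric) (hW : W ∈ invtSubmodule (T : H →ₗ[ℝ] H))
    (hbound : ∀ μ : ℝ, μ ≤ 0 → ∃ c > 0, ∀ v ∈ W, c * ‖v‖ ≤ ‖T v - μ • v‖) :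
    ∃ ε > 0, ∀ v ∈ W, ε * ‖v‖ ^ 2 ≤ ⟪T v, v⟫ := by
  -- `M` is the set of lower bounds of the form on `W`; if none were positive, the largest one
  -- would be `≤ 0` and could still be raised by the previous lemma.
  set M : Set ℝ := ⋂ v ∈ W, {μ | μ * ‖v‖ ^ 2 ≤ ⟪T v, v⟫}
  have hM (μ : ℝ) : μ ∈ M ↔ ∀ v ∈ W, μ * ‖v‖ ^ 2 ≤ ⟪T v, v⟫ := Set.mem_iInter₂
  by_contra! hneg
  have hMle : ∀ μ ∈ M, μ ≤ 0 := fun μ hμ => by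
    by_contra! hμpos
    obtain ⟨v, hv, hlt⟩ := hneg μ hμpos
    exact hlt.not_ge ((hM μ).1 hμ v hv)
  have hMclosed : IsClosed M :=
    isClosed_biInter fun v _ => isClosed_le (by fun_prop) continuous_const
  have hnormT : -‖T‖ ∈ M := (hM _).2 fun v _ => by
    have := abs_real_inner_le_norm (T v) v
    nlinarith [abs_le.1 this, T.le_opNorm v, norm_nonneg v]
  have hsup : sSup M ∈ M := hMclosed.csSup_mem ⟨_, hnormT⟩ ⟨0, hMle⟩
  obtain ⟨c, hc, hcbound⟩ := hbound _ (hMle _ hsup)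
  obtain ⟨δ, hδ, hδM⟩ :=
    hT.exists_pos_forall_add_mul_norm_sq_le_inner hW hc ((hM _).1 hsup) hcbound
  linarith [le_csSup ⟨0, hMle⟩ ((hM _).2 hδM)]

end QuadraticForm

namespace ContinuousLinearMap

variable {H : Type*} [NormedAddCommGroup H] [InnerProductSpace ℝ H] [CompleteSpace H]

theorem isUnit_of_forall_mul_norm_sq_le_inner (S : H →L[ℝ] H) {ε : ℝ} (hε : 0 < ε)
    (h : ∀ u, ε * ‖u‖ ^ 2 ≤ ⟪S u, u⟫) : IsUnit S :=
  S.isUnit_of_forall_le_norm_inner_map (c := ⟨ε, hε.le⟩) hε fun u =>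
    (mul_comm (‖u‖ ^ 2) ε).trans_le <| (h u).trans (Real.le_norm_self _)

theorem spectrum_subset_Ici_of_forall_mul_norm_sq_le_inner (S : H →L[ℝ] H) {ε : ℝ}
    (h : ∀ u, ε * ‖u‖ ^ 2 ≤ ⟪S u, u⟫) : spectrum ℝ S ⊆ Set.Ici ε := by
  intro μ hμ
  by_contra hμε
  have hlt : μ < ε := not_le.1 hμε
  refine spectrum.mem_iff.1 hμ ?_
  rw [← neg_sub, IsUnit.neg_iff]
  refine (S - algebraMap ℝ _ μ).isUnit_of_forall_mul_norm_sq_le_inner (sub_pos.2 hlt) fun u => ?_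
  rw [sub_apply, Algebra.algebraMap_eq_smul_one, smul_apply, one_apply_eq_self, inner_sub_left,
    real_inner_smul_left, real_inner_self_eq_norm_sq]
  linarith [h u]

end ContinuousLinearMap

theorem Module.End.iSup_eigenspace_mem_invtSubmodule_of_commute {R M ι : Type*} [CommRing R]
    [AddCommGroup M] [Module R M] {f g : Module.End R M} (h : Commute f g) (μ : ι → R) :
    (⨆ i, f.eigenspace (μ i)) ∈ g.invtSubmodule := by
  rw [mem_invtSubmodule_iff_map_le, Submodule.map_iSup]
  exact iSup_mono fun i => Submodule.map_le_iff_le_comap.2 fun x hx =>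
    mapsTo_genEigenspace_of_comm h (μ i) 1 hx

section Eigenspaces

variable {H : Type*} [NormedAddCommGroup H] [InnerProductSpace ℝ H]

theorem ker_smul_one_sub_eq_eigenspace (T : H →L[ℝ] H) (μ : ℝ) :
    LinearMap.ker ((μ • (1 : H →L[ℝ] H) - T : H →L[ℝ] H) : H →ₗ[ℝ] H) =
      eigenspace (T : H →ₗ[ℝ] H) μ := by
  ext u
  rw [LinearMap.mem_ker, mem_eigenspace_iff]
  exact sub_eq_zero.trans eq_comm

theorem abs_le_opNorm_of_hasEigenvalue (T : H →L[ℝ] H) {μ : ℝ}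
    (hμ : HasEigenvalue (T : H →ₗ[ℝ] H) μ) : |μ| ≤ ‖T‖ := by
  obtain ⟨u, hu⟩ := hμ.exists_hasEigenvector
  have hTu : ‖T u‖ = |μ| * ‖u‖ := by
    rw [← Real.norm_eq_abs, ← norm_smul, ← hu.apply_eq_smul]; rfl
  exact le_of_mul_le_mul_right (hTu ▸ T.le_opNorm u) (norm_pos_iff.2 hu.2)

theorem exists_mul_norm_le_of_isFredholmOp [CompleteSpace H] {T : H →L[ℝ] H} {μ : ℝ}
    (hF : IsFredholmOp (μ • (1 : H →L[ℝ] H) - T)) :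
    ∃ c > 0, ∀ v ∈ (eigenspace (T : H →ₗ[ℝ] H) μ)ᗮ, c * ‖v‖ ≤ ‖T v - μ • v‖ := by
  obtain ⟨c, hc, hbound⟩ := (μ • (1 : H →L[ℝ] H) - T).exists_mul_norm_le_of_isClosed_range hF.2
  refine ⟨c, hc, fun v hv => ?_⟩
  rw [← ker_smul_one_sub_eq_eigenspace] at hv
  simpa [norm_sub_rev] using hbound v hv

variable {T : H →L[ℝ] H}

theorem LinearMap.IsSymmetric.eq_of_hasEigenvalue_of_abs_sub_lt
    (hT : (T : H →ₗ[ℝ] H).IsSymmetric) {μ ν c : ℝ}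
    (hbound : ∀ v ∈ (eigenspace (T : H →ₗ[ℝ] H) μ)ᗮ, c * ‖v‖ ≤ ‖T v - μ • v‖)
    (hν : HasEigenvalue (T : H →ₗ[ℝ] H) ν) (hνμ : |ν - μ| < c) : ν = μ := by
  by_contra hne
  obtain ⟨u, hu⟩ := hν.exists_hasEigenvector
  have hperp : u ∈ (eigenspace (T : H →ₗ[ℝ] H) μ)ᗮ :=
    Submodule.isOrtho_iff_le.1 (hT.orthogonalFamily_eigenspaces.isOrtho hne) hu.1
  have hTu : T u - μ • u = (ν - μ) • u := by
    rw [sub_smul, ← hu.apply_eq_smul]; rfl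
  have := hbound u hperp
  rw [hTu, norm_smul, Real.norm_eq_abs] at this
  exact (mul_lt_mul_of_pos_right hνμ (norm_pos_iff.2 hu.2)).not_ge this

theorem LinearMap.IsSymmetric.finite_setOf_hasEigenvalue (hT : (T : H →ₗ[ℝ] H).IsSymmetric)
    {s : Set ℝ} (hs : IsClosed s)
    (hbound : ∀ μ ∈ s, ∃ c > 0,
      ∀ v ∈ (eigenspace (T : H →ₗ[ℝ] H) μ)ᗮ, c * ‖v‖ ≤ ‖T v - μ • v‖) :
    {μ ∈ s | HasEigenvalue (T : H →ₗ[ℝ] H) μ}.Finite := by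
  by_contra hinf
  have hsub : {μ ∈ s | HasEigenvalue (T : H →ₗ[ℝ] H) μ} ⊆ s ∩ Set.Icc (-‖T‖) ‖T‖ :=
    fun μ hμ => ⟨hμ.1, abs_le.1 (abs_le_opNorm_of_hasEigenvalue T hμ.2)⟩
  obtain ⟨μ, hμ, hacc⟩ := Set.Infinite.exists_accPt_of_subset_isCompact hinf
    (isCompact_Icc.inter_left hs) hsub
  obtain ⟨c, hc, hcbound⟩ := hbound μ hμ.1
  obtain ⟨ν, ⟨hνball, -, hν⟩, hne⟩ := accPt_iff_nhds.1 hacc _ (Metric.ball_mem_nhds μ hc)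
  exact hne (hT.eq_of_hasEigenvalue_of_abs_sub_lt hcbound hν (Metric.mem_ball.1 hνball))

theorem LinearMap.IsSymmetric.exists_finiteDimensional_eigenspace_le [CompleteSpace H]
    (hT : (T : H →ₗ[ℝ] H).IsSymmetric) {s : Set ℝ} (hs : IsClosed s)
    (hF : ∀ μ ∈ s, IsFredholmOp (μ • (1 : H →L[ℝ] H) - T)) :
    ∃ E : Submodule ℝ H, FiniteDimensional ℝ E ∧
      (∀ μ ∈ s, eigenspace (T : H →ₗ[ℝ] H) μ ≤ E) ∧
      ∀ f : Module.End ℝ H, Commute (T : H →ₗ[ℝ] H) f → E ∈ f.invtSubmodule := by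
  set Λ := {μ ∈ s | HasEigenvalue (T : H →ₗ[ℝ] H) μ}
  have := (hT.finite_setOf_hasEigenvalue hs fun μ hμ =>
    exists_mul_norm_le_of_isFredholmOp (hF μ hμ)).to_subtype
  have (μ : Λ) : FiniteDimensional ℝ (eigenspace (T : H →ₗ[ℝ] H) μ) :=
    ker_smul_one_sub_eq_eigenspace T μ ▸ (hF μ μ.2.1).1
  refine ⟨⨆ μ : Λ, eigenspace (T : H →ₗ[ℝ] H) μ, inferInstance, fun μ hμ => ?_,
    fun f hf => iSup_eigenspace_mem_invtSubmodule_of_commute hf _⟩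
  by_cases hμT : HasEigenvalue (T : H →ₗ[ℝ] H) μ
  · exact le_iSup (fun ν : Λ => eigenspace (T : H →ₗ[ℝ] H) ν) ⟨μ, hμ, hμT⟩
  · rw [hasEigenvalue_iff, not_not] at hμT
    simp [hμT]

end Eigenspaces

section Projections

variable {𝕜 E : Type*} [RCLike 𝕜] [NormedAddCommGroup E] [InnerProductSpace 𝕜 E]

theorem Submodule.starProjection_apply_of_mem_invtSubmodule (K : Submodule 𝕜 E)
    [K.HasOrthogonalProjection] {f : Module.End 𝕜 E} (hK : K ∈ f.invtSubmodule)
    (hKo : Kᗮ ∈ f.invtSubmodule) (x : E) : K.starProjection (f x) = f (K.starProjection x) :=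
  K.eq_starProjection_of_mem_orthogonal' (hK (K.starProjection_apply_mem x))
    (hKo (K.sub_starProjection_mem_orthogonal x)) (by rw [← map_add, add_sub_cancel])

theorem Submodule.orthogonal_mem_invtSubmodule_of_forall {G : Type*} [Group G]
    (ρ : G →* (E ≃ₗᵢ[𝕜] E)) (K : Submodule 𝕜 E)
    (hK : ∀ g, K ∈ invtSubmodule (ρ g : E →ₗ[𝕜] E)) (g : G) :
    Kᗮ ∈ invtSubmodule (ρ g : E →ₗ[𝕜] E) := fun w hw u hu => by
  have h : inner 𝕜 (ρ g⁻¹ u) w = 0 := hw _ (hK g⁻¹ hu)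
  rwa [LinearIsometryEquiv.inner_map_eq_flip, map_inv] at h

theorem isCompactOperator_mul_starProjection (A : E →L[𝕜] E) (K : Submodule 𝕜 E)
    [FiniteDimensional 𝕜 K] : IsCompactOperator (A * K.starProjection) :=
  (isCompactOperator_of_locallyCompactSpace_dom K.orthogonalProjectionOnto).clm_comp
    (A ∘L K.subtypeL)

theorem Submodule.mul_norm_sq_le_inner_sub_mul_starProjection {H : Type*}
    [NormedAddCommGroup H] [InnerProductSpace ℝ H] (E : Submodule ℝ H)
    [E.HasOrthogonalProjection] {T : H →L[ℝ] H} (hEo : Eᗮ ∈ invtSubmodule (T : H →ₗ[ℝ] H))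
    {ε : ℝ} (hcoer : ∀ v ∈ Eᗮ, ε * ‖v‖ ^ 2 ≤ ⟪T v, v⟫) (u : H) :
    ε * ‖u‖ ^ 2 ≤ ⟪(T - (T - ε • 1) * E.starProjection) u, u⟫ := by
  set p := E.starProjection u
  set w := u - p
  have hp : p ∈ E := E.starProjection_apply_mem u
  have hw : w ∈ Eᗮ := E.sub_starProjection_mem_orthogonal u
  have hTw : T w ∈ Eᗮ := hEo hw
  have hSu : (T - (T - ε • 1) * E.starProjection) u = T w + ε • p := by
    simp only [sub_apply, mul_apply_eq_comp, smul_apply, one_apply_eq_self, w, map_sub]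
    abel
  have hpw : ⟪p, w⟫ = 0 := Submodule.inner_right_of_mem_orthogonal hp hw
  have hTwp : ⟪T w, p⟫ = 0 := Submodule.inner_left_of_mem_orthogonal hp hTw
  have hnorm : ‖u‖ ^ 2 = ‖p‖ ^ 2 + ‖w‖ ^ 2 := by
    rw [← sub_add_cancel u p, sq, sq, sq, add_comm w p]
    exact norm_add_sq_eq_norm_sq_add_norm_sq_real hpw
  calc ε * ‖u‖ ^ 2 = ε * ‖w‖ ^ 2 + ε * ‖p‖ ^ 2 := by rw [hnorm]; ring
    _ ≤ ⟪T w, w⟫ + ε * ‖p‖ ^ 2 := by gcongr; exact hcoer w hw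
    _ = ⟪T w + ε • p, p + w⟫ := by
      rw [inner_add_left, inner_add_right, inner_add_right, hTwp, real_inner_smul_left,
        real_inner_smul_left, hpw, real_inner_self_eq_norm_sq]
      ring
    _ = ⟪(T - (T - ε • 1) * E.starProjection) u, u⟫ := by rw [hSu, add_sub_cancel]

end Projections

section Equivariance

variable {H G : Type*} [NormedAddCommGroup H] [InnerProductSpace ℝ H] [Group G]
  {ρ : G →* (H ≃ₗᵢ[ℝ] H)} {A B : H →L[ℝ] H}

theorem isEquivariant_one : IsEquivariant ρ (1 : H →L[ℝ] H) := fun _ _ => rfl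

theorem IsEquivariant.smul (hA : IsEquivariant ρ A) (c : ℝ) : IsEquivariant ρ (c • A) :=
  fun g u => by simp [hA g u]

theorem IsEquivariant.sub (hA : IsEquivariant ρ A) (hB : IsEquivariant ρ B) :
    IsEquivariant ρ (A - B) := fun g u => by simp [hA g u, hB g u]

theorem IsEquivariant.mul (hA : IsEquivariant ρ A) (hB : IsEquivariant ρ B) :
    IsEquivariant ρ (A * B) := fun g u => by simp [hA g, hB g u]

theorem IsEquivariant.commute (hA : IsEquivariant ρ A) (g : G) :
    Commute (A : H →ₗ[ℝ] H) (ρ g : H →ₗ[ℝ] H) :=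
  LinearMap.ext fun u => hA g u

end Equivariance

theorem stmt2_general
    {H : Type*} [NormedAddCommGroup H] [InnerProductSpace ℝ H] [CompleteSpace H]
    {G : Type*} [Group G]
    (ρ : G →* (H ≃ₗᵢ[ℝ] H))
    (T : H →L[ℝ] H)
    (hsa : IsSelfAdjoint T) (hequiv : IsEquivariant ρ T)
    (hess : essSpectrum T ⊆ Set.Ioi (0:ℝ)) :
    ∃ S K : H →L[ℝ] H,
      IsSelfAdjoint S ∧ IsEquivariant ρ S ∧ IsUnit S ∧
      (∀ u : H, u ≠ 0 → 0 < ⟪S u, u⟫) ∧ spectrum ℝ S ⊆ Set.Ioi (0:ℝ) ∧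
      IsCompactOperator ⇑K ∧ IsSelfAdjoint K ∧ IsEquivariant ρ K ∧
      T = S + K := by
  have hT := hsa.isSymmetric
  have hF : ∀ μ ∈ Set.Iic (0 : ℝ), IsFredholmOp (μ • (1 : H →L[ℝ] H) - T) :=
    fun μ hμ => by_contra fun h => (hess h).not_ge (Set.mem_Iic.1 hμ)
  obtain ⟨E, hEfin, hEeig, hEinv⟩ := hT.exists_finiteDimensional_eigenspace_le isClosed_Iic hF
  have hET := hEinv _ (Commute.refl _)
  have hEρ g := hEinv _ (hequiv.commute g)
  have hEoT := hT.orthogonalComplement_mem_invtSubmodule hET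
  obtain ⟨ε, hε, hcoer⟩ := hT.exists_pos_forall_mul_norm_sq_le_inner hEoT fun μ hμ =>
    (exists_mul_norm_le_of_isFredholmOp (hF μ hμ)).imp fun _ ⟨hc, hbound⟩ =>
      ⟨hc, fun v hv => hbound v (Submodule.orthogonal_le (hEeig μ hμ) hv)⟩
  have hTP : Commute T E.starProjection := ContinuousLinearMap.ext fun u =>
    (E.starProjection_apply_of_mem_invtSubmodule hET hEoT u).symm
  have hPρ : IsEquivariant ρ E.starProjection := fun g =>
    E.starProjection_apply_of_mem_invtSubmodule (hEρ g)
      (E.orthogonal_mem_invtSubmodule_of_forall ρ hEρ g)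
  set K := (T - ε • 1) * E.starProjection
  have hKsa : IsSelfAdjoint K := (IsSelfAdjoint.commute_iff
    (hsa.sub (.smul (.all ε) (.one _))) (isSelfAdjoint_starProjection E)).1
    (hTP.sub_left ((Commute.one_left _).smul_left ε))
  have hKρ : IsEquivariant ρ K := (hequiv.sub (isEquivariant_one.smul ε)).mul hPρ
  have hS := E.mul_norm_sq_le_inner_sub_mul_starProjection hEoT hcoer
  refine ⟨T - K, K, hsa.sub hKsa, hequiv.sub hKρ,
    (T - K).isUnit_of_forall_mul_norm_sq_le_inner hε hS,
    fun u hu => (hS u).trans_lt' (by positivity),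
    ((T - K).spectrum_subset_Ici_of_forall_mul_norm_sq_le_inner hS).trans (Set.Ici_subset_Ioi.2 hε),
    isCompactOperator_mul_starProjection _ E, hKsa, hKρ, (sub_add_cancel T K).symm⟩

theorem stmt2
    {H : Type*} [NormedAddCommGroup H] [InnerProductSpace ℝ H] [CompleteSpace H]
    [TopologicalSpace.SeparableSpace H]
    {G : Type*} [Group G] [TopologicalSpace G] [IsTopologicalGroup G] [CompactSpace G]
    {EG : Type*} [NormedAddCommGroup EG] [NormedSpace ℝ EG]
    {HG : Type*} [TopologicalSpace HG] {IG : ModelWithCorners ℝ EG HG}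
    [ChartedSpace HG G] [LieGroup IG (⊤ : ℕ∞) G]
    (ρ : G →* (H ≃ₗᵢ[ℝ] H)) (hρ : ∀ u : H, Continuous fun g : G => ρ g u)
    (T : H →L[ℝ] H)
    (hsa : IsSelfAdjoint T) (hequiv : IsEquivariant ρ T) (hFred : IsFredholmOp T)
    (hess : essSpectrum T ⊆ Set.Ioi (0:ℝ)) :
    ∃ S K : H →L[ℝ] H,
      IsSelfAdjoint S ∧ IsEquivariant ρ S ∧ IsUnit S ∧
      (∀ u : H, u ≠ 0 → 0 < ⟪S u, u⟫) ∧ spectrum ℝ S ⊆ Set.Ioi (0:ℝ) ∧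
      IsCompactOperator ⇑K ∧ IsSelfAdjoint K ∧ IsEquivariant ρ K ∧
      T = S + K :=
  stmt2_general ρ T hsa hequiv hess
end

section
/- Let Q be a symmetry on H, let K : [0,1] → L(H) be norm-continuous with every K_λ compact and selfadjoint, and set L_λ = Q + K_λ. Let (P_n) be an increasing sequence of finite-rank orthogonal projections on H, each commuting with Q, converging weakly to the identity, and let H_n = range(P_n). Then there exists n₀ ∈ ℕ such that for all n ≥ n₀ and all λ ∈ [0,1], the operator (I_H − P_n) L_λ restricted to the orthogonal complement H_n^⊥, viewed as a bounded operator from H_n^⊥ to H_n^⊥, is bijective; in fact ‖(I_H − P_n) L_λ u‖ ≥ (1/2)‖u‖ for all u ∈ H_n^⊥. -/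
/-!
Weak convergence of the projections `P n` to the identity is strong convergence, because
`‖(1 - P n) u‖ ^ 2 = ⟪u, u⟫ - ⟪P n u, u⟫`. The `1 - P n` are contractions, so this convergence is
uniform on compact sets; applied to the images of the unit ball under the compact `K l`, and then
to the compact family `{K l}`, it gives `‖(1 - P n) * K l‖ < 1 / 2` for all large `n`, uniformly
in `l`. On `(range (P n))ᗮ = ker (P n)`, which the commuting symmetry `Q` preserves, the operator
`(1 - P n) * (Q + K l)` agrees with `Q + (1 - P n) * K l`, a perturbation of the unitary `Q` of
norm `< 1 / 2`: this gives the lower bound, and invertibility of that perturbation on all of `H`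
gives surjectivity onto `ker (P n)`.
-/

open scoped RealInnerProductSpace InnerProductSpace
open Filter Topology Set

theorem EquicontinuousOn.tendstoUniformlyOn_of_tendsto {ι X α : Type*} [TopologicalSpace X]
    [UniformSpace α] {F : ι → X → α} {f : X → α} {ℱ : Filter ι} {S : Set X}
    (hF : EquicontinuousOn F S) (hS : IsCompact S)
    (h : ∀ x ∈ S, Tendsto (F · x) ℱ (𝓝 (f x))) : TendstoUniformlyOn F f ℱ S := by
  have := (EquicontinuousOn.tendsto_uniformOnFun_iff_pi' (𝔖 := {S}) (by simpa using hS)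
    (by simpa using hF) ℱ f).2 ?_
  · rw [UniformOnFun.tendsto_iff_tendstoUniformlyOn] at this
    exact this S rfl
  · rw [tendsto_pi_nhds]
    rintro ⟨x, hx⟩
    simp only [sUnion_singleton] at hx
    exact h x hx

theorem ContinuousLinearMap.equicontinuous_of_norm_le {ι 𝕜 E F : Type*}
    [NontriviallyNormedField 𝕜] [SeminormedAddCommGroup E] [SeminormedAddCommGroup F]
    [NormedSpace 𝕜 E] [NormedSpace 𝕜 F] {f : ι → E →L[𝕜] F} {C : ℝ} (h : ∀ i, ‖f i‖ ≤ C) :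
    Equicontinuous fun i => ⇑(f i) :=
  ((NormedSpace.equicontinuous_TFAE f).out 5 1).mp (⟨C, h⟩ : ∃ C, ∀ i, ‖f i‖ ≤ C)

section CompactOperators

variable {ι 𝕜 E F G : Type*} [RCLike 𝕜] [NormedAddCommGroup E] [NormedSpace 𝕜 E]
  [NormedAddCommGroup F] [NormedSpace 𝕜 F] [NormedAddCommGroup G] [NormedSpace 𝕜 G]
  {ℱ : Filter ι} {R : ι → F →L[𝕜] G} {C : ℝ}

theorem tendsto_comp_of_isCompactOperator (hR : ∀ i, ‖R i‖ ≤ C)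
    (hRv : ∀ v, Tendsto (fun i => R i v) ℱ (𝓝 0)) {A : E →L[𝕜] F}
    (hA : IsCompactOperator A) : Tendsto (fun i => (R i).comp A) ℱ (𝓝 0) := by
  obtain ⟨M, hM, hAM⟩ :=
    IsCompactOperator.image_closedBall_subset_compact (f := (A : E →ₗ[𝕜] F)) hA 1
  have hunif : TendstoUniformlyOn (fun i => ⇑(R i)) 0 ℱ M :=
    (ContinuousLinearMap.equicontinuous_of_norm_le hR).equicontinuousOn M
      |>.tendstoUniformlyOn_of_tendsto hM fun v _ => hRv v
  rw [Metric.tendsto_nhds]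
  intro ε hε
  filter_upwards [Metric.tendstoUniformlyOn_iff.1 hunif (ε / 2) (half_pos hε)] with i hi
  have hle : ‖(R i).comp A‖ ≤ ε / 2 := by
    refine ContinuousLinearMap.opNorm_le_of_unit_norm (half_pos hε).le fun u hu => ?_
    have := hi (A u) (hAM ⟨u, by simp [hu], rfl⟩)
    rw [Pi.zero_apply, dist_zero_left] at this
    exact this.le
  rw [dist_zero_right]
  linarith

theorem tendstoUniformlyOn_comp_of_isCompactOperator (hR : ∀ i, ‖R i‖ ≤ C)
    (hRv : ∀ v, Tendsto (fun i => R i v) ℱ (𝓝 0)) {S : Set (E →L[𝕜] F)} (hS : IsCompact S)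
    (hSc : ∀ A ∈ S, IsCompactOperator A) :
    TendstoUniformlyOn (fun i A => (R i).comp A) 0 ℱ S := by
  have hbound : ∀ i, ‖ContinuousLinearMap.compL 𝕜 E F G (R i)‖ ≤ C := fun i =>
    (ContinuousLinearMap.le_of_opNorm_le _ (ContinuousLinearMap.norm_compL_le 𝕜 E F G) (R i)).trans
      (by simpa using hR i)
  exact (ContinuousLinearMap.equicontinuous_of_norm_le hbound).equicontinuousOn S
    |>.tendstoUniformlyOn_of_tendsto hS fun A hA =>
      tendsto_comp_of_isCompactOperator hR hRv (hSc A hA)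

end CompactOperators

theorem isUnit_add_of_mem_unitary {R : Type*} [NormedRing R] [StarRing R] [CStarRing R]
    [CompleteSpace R] {U A : R} (hU : U ∈ unitary R) (hA : ‖A‖ < 1) : IsUnit (U + A) := by
  have hsmall : ‖-(star U * A)‖ < 1 := by
    rwa [norm_neg, CStarRing.norm_mem_unitary_mul A (Unitary.star_mem hU)]
  have hfactor : U + A = U * (1 - -(star U * A)) := by
    rw [sub_neg_eq_add, mul_add, mul_one, ← mul_assoc, Unitary.mul_star_self_of_mem hU, one_mul]
  rw [hfactor]
  exact Unitary.isUnit_coe (U := ⟨U, hU⟩) |>.mul (Units.oneSub _ hsmall).isUnit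

section Projections

variable {ι 𝕜 H : Type*} [RCLike 𝕜] [NormedAddCommGroup H] [InnerProductSpace 𝕜 H]
  [CompleteSpace H]

theorem IsStarProjection.norm_apply_sq {p : H →L[𝕜] H} (hp : IsStarProjection p) (u : H) :
    ‖p u‖ ^ 2 = RCLike.re ⟪p u, u⟫_𝕜 := by
  have hpp : p (p u) = p u := congr($(hp.isIdempotentElem.eq) u)
  rw [← inner_self_eq_norm_sq (𝕜 := 𝕜)]
  congr 1
  calc ⟪p u, p u⟫_𝕜 = ⟪p (p u), u⟫_𝕜 := (hp.isSelfAdjoint.isSymmetric (p u) u).symm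
    _ = ⟪p u, u⟫_𝕜 := by rw [hpp]

theorem tendsto_one_sub_apply_of_tendsto_inner {ℱ : Filter ι} {P : ι → H →L[𝕜] H}
    (hP : ∀ i, IsStarProjection (P i))
    (hweak : ∀ u, Tendsto (fun i => ⟪P i u, u⟫_𝕜) ℱ (𝓝 ⟪u, u⟫_𝕜)) (u : H) :
    Tendsto (fun i => (1 - P i) u) ℱ (𝓝 0) := by
  have hsq : ∀ i, ‖(1 - P i) u‖ ^ 2 = RCLike.re (⟪u, u⟫_𝕜 - ⟪P i u, u⟫_𝕜) := fun i => by
    rw [(hP i).one_sub.norm_apply_sq, sub_apply, inner_sub_left, one_apply_eq_self]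
  have hlim : Tendsto (fun i => ‖(1 - P i) u‖ ^ 2) ℱ (𝓝 0) := by
    simp_rw [hsq]
    have : Tendsto (fun i => RCLike.re (⟪u, u⟫_𝕜 - ⟪P i u, u⟫_𝕜)) ℱ
        (𝓝 (RCLike.re (⟪u, u⟫_𝕜 - ⟪u, u⟫_𝕜))) :=
      (RCLike.continuous_re.tendsto _).comp (tendsto_const_nhds.sub (hweak u))
    simpa using this
  rw [tendsto_zero_iff_norm_tendsto_zero]
  simpa [Real.sqrt_sq (norm_nonneg _)] using hlim.sqrt

end Projections

section Compression

variable {𝕜 H : Type*} [RCLike 𝕜] [NormedAddCommGroup H] [InnerProductSpace 𝕜 H]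
  {P Q A : H →L[𝕜] H}

theorem one_sub_mul_add_apply_of_apply_eq_zero (hPQ : Commute P Q) {u : H} (hu : P u = 0) :
    ((1 - P) * (Q + A)) u = Q u + ((1 - P) * A) u := by
  have hPQu : P (Q u) = 0 := by
    rw [← mul_apply_eq_comp, hPQ.eq, mul_apply_eq_comp, hu, map_zero]
  simp [mul_add, hPQu]

variable [CompleteSpace H]

theorem norm_le_norm_one_sub_mul_add_apply (hQ : Q ∈ unitary (H →L[𝕜] H)) (hPQ : Commute P Q)
    {u : H} (hu : P u = 0) : (1 - ‖(1 - P) * A‖) * ‖u‖ ≤ ‖((1 - P) * (Q + A)) u‖ := by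
  rw [one_sub_mul_add_apply_of_apply_eq_zero hPQ hu]
  have hQu := ContinuousLinearMap.norm_map_of_mem_unitary hQ u
  have hAu := ((1 - P) * A).le_opNorm u
  have := norm_sub_norm_le (Q u) (-(((1 - P) * A) u))
  rw [sub_neg_eq_add, norm_neg] at this
  linarith

theorem bijOn_one_sub_mul_add (hP : IsStarProjection P) (hQ : Q ∈ unitary (H →L[𝕜] H))
    (hPQ : Commute P Q) (hA : ‖(1 - P) * A‖ < 1) :
    BijOn ⇑((1 - P) * (Q + A)) (LinearMap.ker (P : H →ₗ[𝕜] H) : Set H)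
      (LinearMap.ker (P : H →ₗ[𝕜] H) : Set H) := by
  have hP_one_sub : ∀ v, P ((1 - P) v) = 0 := fun v => by
    rw [← mul_apply_eq_comp, hP.mul_one_sub_self, zero_apply]
  refine ⟨fun u _ => ?_, fun u hu v hv huv => ?_, fun w hw => ?_⟩
  · simpa [mul_apply_eq_comp] using hP_one_sub ((Q + A) u)
  · have hbound := norm_le_norm_one_sub_mul_add_apply (A := A) hQ hPQ
      ((LinearMap.ker (P : H →ₗ[𝕜] H)).sub_mem hu hv)
    rw [map_sub, huv, sub_self, norm_zero] at hbound
    have : ‖u - v‖ ≤ 0 := by nlinarith [norm_nonneg (u - v)]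
    exact sub_eq_zero.1 (norm_le_zero_iff.1 this)
  · obtain ⟨u, hu⟩ := ((ContinuousLinearMap.isUnit_iff_bijective).1
      (isUnit_add_of_mem_unitary hQ hA)).2 w
    -- `P` kills `w` and `(1 - P) A u`, and commutes with `Q`
    have hQPu : Q (P u) = 0 := by
      have := congrArg P hu
      rw [add_apply, map_add, mul_apply_eq_comp, hP_one_sub,
        add_zero, ← mul_apply_eq_comp, hPQ.eq] at this
      exact this.trans hw
    have hPu : P u = 0 := by
      rw [← norm_eq_zero, ← ContinuousLinearMap.norm_map_of_mem_unitary hQ, hQPu, norm_zero]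
    exact ⟨u, hPu, (one_sub_mul_add_apply_of_apply_eq_zero hPQ hPu).trans hu⟩

end Compression

theorem stmt9_general
    {H : Type*} [NormedAddCommGroup H] [InnerProductSpace ℝ H] [CompleteSpace H]
    (Q : H →L[ℝ] H) (hQsa : IsSelfAdjoint Q) (hQsq : Q * Q = 1)
    (K : Set.Icc (0:ℝ) 1 → H →L[ℝ] H) (hK : Continuous K)
    (hKc : ∀ l, IsCompactOperator ⇑(K l))
    (P : ℕ → H →L[ℝ] H)
    (hPsa : ∀ n, IsSelfAdjoint (P n)) (hPidem : ∀ n, IsIdempotentElem (P n))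
    (hPcomm : ∀ n, P n * Q = Q * P n)
    (hPweak : ∀ u v : H, Filter.Tendsto (fun n => ⟪P n u, v⟫) Filter.atTop (nhds ⟪u, v⟫)) :
    ∃ n₀ : ℕ, ∀ n ≥ n₀, ∀ l : Set.Icc (0:ℝ) 1,
      Set.BijOn (⇑((1 - P n) * (Q + K l)))
        ((LinearMap.range (P n : H →ₗ[ℝ] H))ᗮ : Set H) ((LinearMap.range (P n : H →ₗ[ℝ] H))ᗮ : Set H) ∧
      ∀ u ∈ (LinearMap.range (P n : H →ₗ[ℝ] H))ᗮ, (1 / 2 : ℝ) * ‖u‖ ≤ ‖((1 - P n) * (Q + K l)) u‖ := by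
  have hP : ∀ n, IsStarProjection (P n) := fun n => ⟨hPidem n, hPsa n⟩
  have hQ : Q ∈ unitary (H →L[ℝ] H) := by
    rw [Unitary.mem_iff, hQsa.star_eq, hQsq]
    exact ⟨rfl, rfl⟩
  have hsmall : ∀ᶠ n in atTop, ∀ l, ‖(1 - P n) * K l‖ < 1 / 2 := by
    have hunif := tendstoUniformlyOn_comp_of_isCompactOperator (R := fun n => 1 - P n)
      (fun n => (hP n).one_sub.norm_le)
      (tendsto_one_sub_apply_of_tendsto_inner hP fun u => hPweak u u)
      (isCompact_range hK) (forall_mem_range.2 hKc)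
    filter_upwards [Metric.tendstoUniformlyOn_iff.1 hunif (1 / 2) one_half_pos] with n hn l
    have := hn (K l) (mem_range_self l)
    rwa [Pi.zero_apply, dist_zero_left] at this
  obtain ⟨n₀, hn₀⟩ := eventually_atTop.1 hsmall
  refine ⟨n₀, fun n hn l => ?_⟩
  have hKl := hn₀ n hn l
  rw [(hPsa n).isSymmetric.orthogonal_range]
  refine ⟨bijOn_one_sub_mul_add (hP n) hQ (hPcomm n) (by linarith), fun u hu => ?_⟩
  calc 1 / 2 * ‖u‖ ≤ (1 - ‖(1 - P n) * K l‖) * ‖u‖ := by gcongr; linarith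
    _ ≤ _ := norm_le_norm_one_sub_mul_add_apply hQ (hPcomm n) hu

theorem stmt9
    {H : Type*} [NormedAddCommGroup H] [InnerProductSpace ℝ H] [CompleteSpace H]
    [TopologicalSpace.SeparableSpace H]
    (Q : H →L[ℝ] H) (hQsa : IsSelfAdjoint Q) (hQsq : Q * Q = 1)
    (K : Set.Icc (0:ℝ) 1 → H →L[ℝ] H) (hK : Continuous K)
    (hKc : ∀ l, IsCompactOperator ⇑(K l)) (hKsa : ∀ l, IsSelfAdjoint (K l))
    (P : ℕ → H →L[ℝ] H)
    (hPsa : ∀ n, IsSelfAdjoint (P n)) (hPidem : ∀ n, IsIdempotentElem (P n))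
    (hPfin : ∀ n, FiniteDimensional ℝ (LinearMap.range (P n : H →ₗ[ℝ] H)))
    (hPmono : ∀ n, LinearMap.range (P n : H →ₗ[ℝ] H) ≤ LinearMap.range (P (n + 1) : H →ₗ[ℝ] H))
    (hPcomm : ∀ n, P n * Q = Q * P n)
    (hPweak : ∀ u v : H, Filter.Tendsto (fun n => ⟪P n u, v⟫) Filter.atTop (nhds ⟪u, v⟫)) :
    ∃ n₀ : ℕ, ∀ n ≥ n₀, ∀ l : Set.Icc (0:ℝ) 1,
      Set.BijOn (⇑((1 - P n) * (Q + K l)))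
        ((LinearMap.range (P n : H →ₗ[ℝ] H))ᗮ : Set H) ((LinearMap.range (P n : H →ₗ[ℝ] H))ᗮ : Set H) ∧
      ∀ u ∈ (LinearMap.range (P n : H →ₗ[ℝ] H))ᗮ, (1 / 2 : ℝ) * ‖u‖ ≤ ‖((1 - P n) * (Q + K l)) u‖ :=
  stmt9_general Q hQsa hQsq K hK hKc P hPsa hPidem hPcomm hPweak
end

section
/- Let H be a finite-dimensional real inner product space, L : H → H a selfadjoint linear map, and μ ∈ (−π/2, π/2). On E = H × H define J(u,v) = (−v,u). Then there exists a differentiable curve u : [0,1] → E, not identically zero, satisfying J(u′(t)) = μ·u(t) for all t ∈ [0,1], u(0) ∈ {(w, Lw) : w ∈ H}, and u(1) ∈ H × {0}, if and only if tan(μ) is an eigenvalue of L. -/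
/-!
With `rot θ = exp (θ J) = cos θ + sin θ J`, the equation `J u' = μ u` says `u' = -μ J u`, so
`t ↦ rot (μ t) (u t)` has zero derivative and `u t = rot (-μ t) (u 0)`. For `u 0 = (w, L w)` the
second component of `u 1` is `cos μ • L w - sin μ • w`, which vanishes iff `L w = tan μ • w`, and
`u` vanishes identically iff `w = 0`.
-/

open scoped RealInnerProductSpace

open Real Set

lemma cos_smul_sub_sin_smul_eq_zero_iff {M : Type*} [AddCommGroup M] [Module ℝ M] {μ : ℝ}
    (hμ : cos μ ≠ 0) {v w : M} : cos μ • v - sin μ • w = 0 ↔ v = tan μ • w := by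
  rw [sub_eq_zero, tan_eq_sin_div_cos, div_eq_inv_mul, mul_smul]
  constructor
  · intro h
    rw [← h, inv_smul_smul₀ hμ]
  · rintro rfl
    rw [smul_inv_smul₀ hμ]

namespace ProdRotation

variable {E : Type*} [NormedAddCommGroup E] [NormedSpace ℝ E]

def J (p : E × E) : E × E := (-p.2, p.1)

noncomputable def rot (θ : ℝ) (p : E × E) : E × E := cos θ • p + sin θ • J p

omit [NormedSpace ℝ E] in
@[simp] lemma J_fst (p : E × E) : (J p).1 = -p.2 := rfl

omit [NormedSpace ℝ E] in
@[simp] lemma J_snd (p : E × E) : (J p).2 = p.1 := rfl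

@[simp] lemma rot_fst (θ : ℝ) (p : E × E) : (rot θ p).1 = cos θ • p.1 - sin θ • p.2 := by
  simp [rot, sub_eq_add_neg]

@[simp] lemma rot_snd (θ : ℝ) (p : E × E) : (rot θ p).2 = sin θ • p.1 + cos θ • p.2 := by
  simp [rot, add_comm]

lemma J_smul_rot_J (c θ : ℝ) (p : E × E) : J (c • rot θ (J p)) = -c • rot θ p := by
  ext <;> simp <;> module

lemma rot_smul (θ c : ℝ) (p : E × E) : rot θ (c • p) = c • rot θ p := by
  ext <;> simp only [rot_fst, rot_snd, Prod.smul_fst, Prod.smul_snd] <;> module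

@[simp] lemma rot_zero (θ : ℝ) : rot θ (0 : E × E) = 0 := by
  simp [rot, J]

lemma rot_zero_left (p : E × E) : rot 0 p = p := by
  simp [rot]

lemma rot_rot (α β : ℝ) (p : E × E) : rot α (rot β p) = rot (α + β) p := by
  ext <;> simp only [rot_fst, rot_snd, cos_add, sin_add] <;> module

lemma eq_rot_of_rot_eq {α β : ℝ} {p q : E × E} (h : rot α p = rot β q) : p = rot (β - α) q := by
  rw [← rot_zero_left p, ← neg_add_cancel α, ← rot_rot, h, rot_rot, neg_add_eq_sub]

lemma add_smul_J_eq_zero_of_J_eq {v p : E × E} {μ : ℝ} (h : J v = μ • p) : v + μ • J p = 0 := by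
  rw [Prod.ext_iff] at h ⊢
  simp only [J_fst, J_snd, Prod.smul_fst, Prod.smul_snd] at h ⊢
  constructor
  · simp [← h.2]
  · simp [← h.1]

lemma _root_.HasDerivWithinAt.rot_mul_comp {u : ℝ → E × E} {u' : E × E} {s : Set ℝ} {t : ℝ}
    (c : ℝ) (hu : HasDerivWithinAt u u' s t) :
    HasDerivWithinAt (fun t => rot (c * t) (u t)) (rot (c * t) (u' + c • J (u t))) s t := by
  have hc : HasDerivAt (fun t => cos (c * t)) (-sin (c * t) * c) t := by
    simpa using ((hasDerivAt_id t).const_mul c).cos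
  have hs : HasDerivAt (fun t => sin (c * t)) (cos (c * t) * c) t := by
    simpa using ((hasDerivAt_id t).const_mul c).sin
  have hfst : HasDerivWithinAt (fun t => (u t).1) u'.1 s t := hu.fst
  have hsnd : HasDerivWithinAt (fun t => (u t).2) u'.2 s t := hu.snd
  have hJ : HasDerivWithinAt (fun t => J (u t)) (J u') s t := hsnd.neg.prodMk hfst
  refine ((hc.hasDerivWithinAt.smul hu).add (hs.hasDerivWithinAt.smul hJ)).congr_deriv ?_
  ext <;> simp <;> module

lemma hasDerivAt_rot_mul (c : ℝ) (p : E × E) (t : ℝ) :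
    HasDerivAt (fun t => rot (c * t) p) (c • rot (c * t) (J p)) t := by
  have := ((hasDerivAt_const t p).hasDerivWithinAt (s := univ)).rot_mul_comp c
  rwa [zero_add, rot_smul, hasDerivWithinAt_univ] at this

lemma eq_rot_of_J_deriv_eq_smul {u u' : ℝ → E × E} {s : Set ℝ} {μ : ℝ} (hs : Convex ℝ s)
    (hu : ∀ t ∈ s, HasDerivWithinAt u (u' t) s t) (hJ : ∀ t ∈ s, J (u' t) = μ • u t)
    {t₀ t : ℝ} (ht₀ : t₀ ∈ s) (ht : t ∈ s) : u t = rot (μ * (t₀ - t)) (u t₀) := by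
  have hconst : ∀ t ∈ s, HasDerivWithinAt (fun t => rot (μ * t) (u t)) 0 s t := fun t ht => by
    simpa [add_smul_J_eq_zero_of_J_eq (hJ t ht)] using (hu t ht).rot_mul_comp μ
  have := hs.norm_image_sub_le_of_norm_hasDerivWithin_le hconst (fun _ _ => norm_zero.le) ht₀ ht
  rw [zero_mul, norm_le_zero_iff, sub_eq_zero] at this
  rw [eq_rot_of_rot_eq this, mul_sub]

lemma snd_rot_neg_eq_zero_iff {μ : ℝ} (hμ : cos μ ≠ 0) {w v : E} :
    (rot (-μ) (w, v)).2 = 0 ↔ v = tan μ • w := by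
  rw [rot_snd, sin_neg, cos_neg, neg_smul, neg_add_eq_sub]
  exact cos_smul_sub_sin_smul_eq_zero_iff hμ

end ProdRotation

open ProdRotation

theorem stmt13_general
    {H : Type*} [NormedAddCommGroup H] [InnerProductSpace ℝ H]
    (L : H →ₗ[ℝ] H)
    (μ : ℝ) (hμ : μ ∈ Set.Ioo (-(Real.pi / 2)) (Real.pi / 2)) :
    (∃ u u' : ℝ → H × H,
        (∃ t ∈ Set.Icc (0:ℝ) 1, u t ≠ 0) ∧
        (∀ t ∈ Set.Icc (0:ℝ) 1, HasDerivWithinAt u (u' t) (Set.Icc (0:ℝ) 1) t) ∧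
        (∀ t ∈ Set.Icc (0:ℝ) 1, (-(u' t).2, (u' t).1) = μ • u t) ∧
        (u 0).2 = L (u 0).1 ∧ (u 1).2 = 0) ↔
      ∃ w : H, w ≠ 0 ∧ L w = Real.tan μ • w := by
  have hcos : cos μ ≠ 0 := (cos_pos_of_mem_Ioo hμ).ne'
  constructor
  · rintro ⟨u, u', ⟨t₀, ht₀, hu₀⟩, hu, hJ, h0, h1⟩
    have hrot : ∀ t ∈ Icc (0 : ℝ) 1, u t = rot (-μ * t) ((u 0).1, L (u 0).1) := fun t ht => by
      rw [eq_rot_of_J_deriv_eq_smul (convex_Icc 0 1) hu hJ (left_mem_Icc.2 zero_le_one) ht, ← h0,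
        zero_sub, mul_neg, neg_mul]
    refine ⟨(u 0).1, fun hw => hu₀ ?_, ?_⟩
    · rw [hrot t₀ ht₀, hw, map_zero, Prod.mk_zero_zero, rot_zero]
    · rw [← snd_rot_neg_eq_zero_iff hcos, ← h1, hrot 1 (right_mem_Icc.2 zero_le_one), mul_one]
  · rintro ⟨w, hw, hLw⟩
    refine ⟨fun t => rot (-μ * t) (w, L w), fun t => -μ • rot (-μ * t) (J (w, L w)),
      ⟨0, left_mem_Icc.2 zero_le_one,
        fun h => hw (by simpa [rot_zero_left] using congrArg Prod.fst h)⟩,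
      fun t _ => (hasDerivAt_rot_mul _ _ t).hasDerivWithinAt,
      fun t _ => (J_smul_rot_J (-μ) (-μ * t) (w, L w)).trans (by rw [neg_neg]),
      by simp [rot_zero_left], ?_⟩
    simp only [mul_one]
    exact (snd_rot_neg_eq_zero_iff hcos).2 hLw

theorem stmt13
    {H : Type*} [NormedAddCommGroup H] [InnerProductSpace ℝ H] [FiniteDimensional ℝ H]
    (L : H →ₗ[ℝ] H) (hL : ∀ u v : H, ⟪L u, v⟫ = ⟪u, L v⟫)
    (μ : ℝ) (hμ : μ ∈ Set.Ioo (-(Real.pi / 2)) (Real.pi / 2)) :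
    (∃ u u' : ℝ → H × H,
        (∃ t ∈ Set.Icc (0:ℝ) 1, u t ≠ 0) ∧
        (∀ t ∈ Set.Icc (0:ℝ) 1, HasDerivWithinAt u (u' t) (Set.Icc (0:ℝ) 1) t) ∧
        (∀ t ∈ Set.Icc (0:ℝ) 1, (-(u' t).2, (u' t).1) = μ • u t) ∧
        (u 0).2 = L (u 0).1 ∧ (u 1).2 = 0) ↔
      ∃ w : H, w ≠ 0 ∧ L w = Real.tan μ • w :=
  stmt13_general L μ hμ
end
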